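/- arXiv:2001.00700 — 2 statements merged into one kernel-verified Lean document; each statement's English description precedes it below -/
import Mathlib

section
/- Under Assumptions 1, 2 and 3, for every x∈ℤ₊², Γ⊂𝒟_x, and hence 𝒟⊂𝒟_x. -/
open scoped ENNReal

namespace MMRW2d

/-! ## General kernels over a countable index set, with entries in `ℝ≥0∞` -/

/-- Kernel (infinite matrix) multiplication over `ℝ≥0∞`. -/
noncomputable def kmul {α : Type*} (p q : α → α → ℝ≥0∞) : α → α → ℝ≥0∞ :=
  fun i j => ∑' k, p i k * q k j

/-- `n`-step kernel power. -/
noncomputable def kpow {α : Type*} [DecidableEq α] (p : α → α → ℝ≥0∞) : ℕ → α → α → ℝ≥0∞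
  | 0 => fun i j => if i = j then 1 else 0
  | n + 1 => kmul p (kpow p n)

/-- Convergence parameter `cp(A) = sup{r ≥ 0 : Σ_n rⁿ Aⁿ < ∞ entrywise}`. -/
noncomputable def cp {α : Type*} [DecidableEq α] (p : α → α → ℝ≥0∞) : ℝ≥0∞ :=
  sSup {r : ℝ≥0∞ | ∀ i j, (∑' n : ℕ, r ^ n * kpow p n i j) ≠ ⊤}

/-- `R` is the minimal nonnegative solution of `R = R² A₋₁ + R A₀ + A₁`. -/
def IsMinimalSolution {κ : Type*} (Am A0 Ap R : κ → κ → ℝ≥0∞) : Prop :=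
  (∀ i j, R i j = kmul (kmul R R) Am i j + kmul R A0 i j + Ap i j) ∧
  ∀ S : κ → κ → ℝ≥0∞,
    (∀ i j, S i j = kmul (kmul S S) Am i j + kmul S A0 i j + Ap i j) → ∀ i j, R i j ≤ S i j

variable {s₀ : ℕ}

/-! ## The 2d skip-free Markov-modulated random walk -/

/-- The defining data of a 2d-MMRW: the blocks `A_{i,j}` are nonnegative, vanish outside
`i,j ∈ {-1,0,1}`, and `Σ_{i,j} A_{i,j}` is stochastic. -/
structure IsMMRW (A : ℤ → ℤ → Matrix (Fin s₀) (Fin s₀) ℝ) : Prop where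
  nonneg : ∀ i j a b, 0 ≤ A i j a b
  skipfree : ∀ i j : ℤ, (i ∉ Finset.Icc (-1 : ℤ) 1 ∨ j ∉ Finset.Icc (-1 : ℤ) 1) → A i j = 0
  stochastic : ∀ a, ∑ i ∈ Finset.Icc (-1 : ℤ) 1, ∑ j ∈ Finset.Icc (-1 : ℤ) 1, ∑ b, A i j a b = 1

/-- The transition kernel of the 2d-MMRW `{Y_n}` on `𝕊 = ℤ² × S₀`. -/
noncomputable def ker (A : ℤ → ℤ → Matrix (Fin s₀) (Fin s₀) ℝ) :
    (ℤ × ℤ × Fin s₀) → (ℤ × ℤ × Fin s₀) → ℝ≥0∞ :=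
  fun y y' => ENNReal.ofReal (A (y'.1 - y.1) (y'.2.1 - y.2.1) y.2.2 y'.2.2)

/-- The substochastic kernel `P₊`, the restriction of `P` to `𝕊₊ = ℤ₊² × S₀`. -/
noncomputable def kerPlus (A : ℤ → ℤ → Matrix (Fin s₀) (Fin s₀) ℝ) :
    (ℕ × ℕ × Fin s₀) → (ℕ × ℕ × Fin s₀) → ℝ≥0∞ :=
  fun y y' =>
    ENNReal.ofReal (A ((y'.1 : ℤ) - (y.1 : ℤ)) ((y'.2.1 : ℤ) - (y.2.1 : ℤ)) y.2.2 y'.2.2)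

/-- The occupation measure: `q̃_{y,y'} = E[Σ_{n<τ} 1(Y_n = y') | Y₀ = y] = Σ_n [P₊ⁿ]_{y,y'}`,
the `(y,y')` entry of the fundamental matrix of `P₊`. -/
noncomputable def occ (A : ℤ → ℤ → Matrix (Fin s₀) (Fin s₀) ℝ) (y y' : ℕ × ℕ × Fin s₀) :
    ℝ≥0∞ :=
  ∑' n : ℕ, kpow (kerPlus A) n y y'

/-- The expected exit time `E(τ | Y₀ = y) = Σ_{n≥0} P(τ > n | Y₀ = y)
= Σ_n Σ_{y'∈𝕊₊} [P₊ⁿ]_{y,y'}`. -/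
noncomputable def Etau (A : ℤ → ℤ → Matrix (Fin s₀) (Fin s₀) ℝ) (y : ℕ × ℕ × Fin s₀) : ℝ≥0∞ :=
  ∑' n : ℕ, ∑' y' : ℕ × ℕ × Fin s₀, kpow (kerPlus A) n y y'

/-- Assumption 1: `{Y_n}` is irreducible and aperiodic (equivalently, primitive). -/
def Assumption1 (A : ℤ → ℤ → Matrix (Fin s₀) (Fin s₀) ℝ) : Prop :=
  ∀ y y' : ℤ × ℤ × Fin s₀, ∃ N : ℕ, ∀ n ≥ N, 0 < kpow (ker A) n y y'

/-- Assumption 3: the substochastic matrix `P₊` is irreducible. -/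
def Assumption3 (A : ℤ → ℤ → Matrix (Fin s₀) (Fin s₀) ℝ) : Prop :=
  ∀ y y' : ℕ × ℕ × Fin s₀, ∃ n : ℕ, 1 ≤ n ∧ 0 < kpow (kerPlus A) n y y'

/-- Mean drift `a₁ = π_{*,*}(−A_{−1,*}+A_{1,*})𝟏` in the first coordinate. -/
noncomputable def a1 (A : ℤ → ℤ → Matrix (Fin s₀) (Fin s₀) ℝ) (π : Fin s₀ → ℝ) : ℝ :=
  ∑ a, π a * ∑ b, ∑ k ∈ Finset.Icc (-1 : ℤ) 1, (A 1 k a b - A (-1) k a b)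

/-- Mean drift `a₂ = π_{*,*}(−A_{*,−1}+A_{*,1})𝟏` in the second coordinate. -/
noncomputable def a2 (A : ℤ → ℤ → Matrix (Fin s₀) (Fin s₀) ℝ) (π : Fin s₀ → ℝ) : ℝ :=
  ∑ a, π a * ∑ b, ∑ k ∈ Finset.Icc (-1 : ℤ) 1, (A k 1 a b - A k (-1) a b)

/-- `π` is the stationary distribution of the stochastic matrix `A_{*,*} = Σ_{i,j} A_{i,j}`. -/
def IsStationary (A : ℤ → ℤ → Matrix (Fin s₀) (Fin s₀) ℝ) (π : Fin s₀ → ℝ) : Prop :=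
  (∀ a, 0 ≤ π a) ∧ (∑ a, π a = 1) ∧
    ∀ b, (∑ a, π a * ∑ i ∈ Finset.Icc (-1 : ℤ) 1, ∑ j ∈ Finset.Icc (-1 : ℤ) 1, A i j a b) = π b

/-- Assumption 2: `a₁ < 0` or `a₂ < 0`. -/
def Assumption2 (A : ℤ → ℤ → Matrix (Fin s₀) (Fin s₀) ℝ) : Prop :=
  ∃ π : Fin s₀ → ℝ, IsStationary A π ∧ (a1 A π < 0 ∨ a2 A π < 0)

/-! ## Spectral radius and the sets Γ, Γ̄, 𝒟 -/

/-- Spectral radius (maximum modulus of the eigenvalues) of a complex matrix. -/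
noncomputable def sprC (M : Matrix (Fin s₀) (Fin s₀) ℂ) : ℝ :=
  sSup ((fun z => ‖z‖) '' spectrum ℂ M)

/-- The matrix moment generating function `A_{*,*}(θ₁,θ₂) = Σ_{i,j} e^{iθ₁+jθ₂} A_{i,j}`. -/
noncomputable def Ass (A : ℤ → ℤ → Matrix (Fin s₀) (Fin s₀) ℝ) (θ₁ θ₂ : ℝ) :
    Matrix (Fin s₀) (Fin s₀) ℝ :=
  ∑ i ∈ Finset.Icc (-1 : ℤ) 1, ∑ j ∈ Finset.Icc (-1 : ℤ) 1,
    Real.exp ((i : ℝ) * θ₁ + (j : ℝ) * θ₂) • A i j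

/-- `χ(θ₁,θ₂) = spr(A_{*,*}(θ₁,θ₂))`. -/
noncomputable def chi (A : ℤ → ℤ → Matrix (Fin s₀) (Fin s₀) ℝ) (θ₁ θ₂ : ℝ) : ℝ :=
  sprC ((Ass A θ₁ θ₂).map Complex.ofReal)

/-- `Γ = {(θ₁,θ₂) : spr(A_{*,*}(θ₁,θ₂)) < 1}`. -/
def GammaSet (A : ℤ → ℤ → Matrix (Fin s₀) (Fin s₀) ℝ) : Set (ℝ × ℝ) :=
  {θ | chi A θ.1 θ.2 < 1}

/-- `Γ̄ = {(θ₁,θ₂) : spr(A_{*,*}(θ₁,θ₂)) ≤ 1}`. -/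
def GammaBar (A : ℤ → ℤ → Matrix (Fin s₀) (Fin s₀) ℝ) : Set (ℝ × ℝ) :=
  {θ | chi A θ.1 θ.2 ≤ 1}

/-- `𝒟 = {θ : θ < θ' componentwise for some θ' ∈ Γ}`. -/
def Dset (A : ℤ → ℤ → Matrix (Fin s₀) (Fin s₀) ℝ) : Set (ℝ × ℝ) :=
  {θ | ∃ θ' ∈ GammaSet A, θ.1 < θ'.1 ∧ θ.2 < θ'.2}

/-! ## Moment generating function of the occupation measures and its domain -/

/-- `(j,j')`-entry of `Φ_x(θ₁,θ₂) = Σ_{k₁,k₂≥0} e^{k₁θ₁+k₂θ₂} N_{x,(k₁,k₂)}`. -/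
noncomputable def Phi (A : ℤ → ℤ → Matrix (Fin s₀) (Fin s₀) ℝ) (x : ℕ × ℕ) (θ : ℝ × ℝ)
    (j j' : Fin s₀) : ℝ≥0∞ :=
  ∑' k : ℕ × ℕ, ENNReal.ofReal (Real.exp ((k.1 : ℝ) * θ.1 + (k.2 : ℝ) * θ.2)) *
    occ A (x.1, x.2, j) (k.1, k.2, j')

/-- `𝒟_x`: the interior of the set where `Φ_x` is (entrywise) finite. -/
noncomputable def domPhi (A : ℤ → ℤ → Matrix (Fin s₀) (Fin s₀) ℝ) (x : ℕ × ℕ) : Set (ℝ × ℝ) :=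
  interior {θ : ℝ × ℝ | ∀ j j', Phi A x θ j j' ≠ ⊤}

/-! ## QBD blocks and rate matrices -/

/-- Block `A^{(1)}_i`: matrix indexed by `ℤ₊ × S₀`, block tridiagonal with blocks `A_{i,·}`. -/
noncomputable def A1blk (A : ℤ → ℤ → Matrix (Fin s₀) (Fin s₀) ℝ) (i : ℤ) :
    (ℕ × Fin s₀) → (ℕ × Fin s₀) → ℝ≥0∞ :=
  fun y y' => ENNReal.ofReal (A i ((y'.1 : ℤ) - (y.1 : ℤ)) y.2 y'.2)

/-- Block `A^{(2)}_i`: matrix indexed by `ℤ₊ × S₀`, block tridiagonal with blocks `A_{·,i}`. -/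
noncomputable def A2blk (A : ℤ → ℤ → Matrix (Fin s₀) (Fin s₀) ℝ) (i : ℤ) :
    (ℕ × Fin s₀) → (ℕ × Fin s₀) → ℝ≥0∞ :=
  fun y y' => ENNReal.ofReal (A ((y'.1 : ℤ) - (y.1 : ℤ)) i y.2 y'.2)

/-- Block `A^{(1,1)}_d`, indexed by the phase space `ℤ × S₀` of the QBD representation with
level `min{X₁,X₂}` and phase `(X₁−X₂, J)`: from a state with phase `k`, a jump `(i,l)` moves
the phase to `k+i−l` and the level by `min(max(k,0)+i, max(−k,0)+l)`. -/
noncomputable def A11blk (A : ℤ → ℤ → Matrix (Fin s₀) (Fin s₀) ℝ) (d : ℤ) :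
    (ℤ × Fin s₀) → (ℤ × Fin s₀) → ℝ≥0∞ :=
  fun y y' => ∑ i ∈ Finset.Icc (-1 : ℤ) 1, ∑ l ∈ Finset.Icc (-1 : ℤ) 1,
    if y'.1 = y.1 + i - l ∧ d = min (max y.1 0 + i) (max (-y.1) 0 + l) then
      ENNReal.ofReal (A i l y.2 y'.2) else 0

/-! ## Radii of convergence of the generating functions of the occupation measures -/

/-- Radius of convergence `r^{(1)}_{y,(x₂',j')}` of `Σ_k q̃_{y,(k,x₂',j')} z^k`. -/
noncomputable def r1 (A : ℤ → ℤ → Matrix (Fin s₀) (Fin s₀) ℝ) (y : ℕ × ℕ × Fin s₀)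
    (x₂' : ℕ) (j' : Fin s₀) : ℝ≥0∞ :=
  sSup {r : ℝ≥0∞ | (∑' k : ℕ, r ^ k * occ A y (k, x₂', j')) ≠ ⊤}

/-- Radius of convergence `r^{(2)}_{y,(x₁',j')}` of `Σ_k q̃_{y,(x₁',k,j')} z^k`. -/
noncomputable def r2 (A : ℤ → ℤ → Matrix (Fin s₀) (Fin s₀) ℝ) (y : ℕ × ℕ × Fin s₀)
    (x₁' : ℕ) (j' : Fin s₀) : ℝ≥0∞ :=
  sSup {r : ℝ≥0∞ | (∑' k : ℕ, r ^ k * occ A y (x₁', k, j')) ≠ ⊤}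

/-- Radius of convergence `r^{(1,1)}_{(k,j),(k',j')}` of
`φ̂^{(1,1)}_{(k,j),(k',j')}(z) = Σ_l q̃_{(k∨0,−(k∧0),j),(l+(k'∨0),l−(k'∧0),j')} z^l`. -/
noncomputable def r11 (A : ℤ → ℤ → Matrix (Fin s₀) (Fin s₀) ℝ) (k : ℤ) (j : Fin s₀)
    (k' : ℤ) (j' : Fin s₀) : ℝ≥0∞ :=
  sSup {r : ℝ≥0∞ | (∑' l : ℕ,
    r ^ l * occ A ((max k 0).toNat, (-(min k 0)).toNat, j)
      (l + (max k' 0).toNat, l + (-(min k' 0)).toNat, j')) ≠ ⊤}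

/-! ## The complex matrix function Ĉ(z,w) -/

/-- `Ĉ(z,w) = Σ_{i,j∈{−1,0,1}} zⁱ wʲ A_{i,j}` as a complex matrix. -/
noncomputable def Chat (A : ℤ → ℤ → Matrix (Fin s₀) (Fin s₀) ℝ) (z w : ℂ) :
    Matrix (Fin s₀) (Fin s₀) ℂ :=
  ∑ i ∈ Finset.Icc (-1 : ℤ) 1, ∑ j ∈ Finset.Icc (-1 : ℤ) 1,
    (z ^ i * w ^ j) • (A i j).map Complex.ofReal

/-! ## The lifted chain `ᶜY` (quotients and remainders mod `c`) -/

/-- The block `ᶜA_{i,j}` of the lifted 2d-MMRW, expressed via the original blocks: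
`ᶜA_{i,j}((m₁,m₂,a),(m₁',m₂',b)) = A_{c₁ i + (m₁'−m₁), c₂ j + (m₂'−m₂)}(a,b)`. -/
noncomputable def cA (A : ℤ → ℤ → Matrix (Fin s₀) (Fin s₀) ℝ) (c₁ c₂ : ℕ) (i j : ℤ) :
    Matrix (Fin c₁ × Fin c₂ × Fin s₀) (Fin c₁ × Fin c₂ × Fin s₀) ℝ :=
  Matrix.of fun y y' =>
    A ((c₁ : ℤ) * i + (((y'.1 : ℕ) : ℤ) - ((y.1 : ℕ) : ℤ)))
      ((c₂ : ℤ) * j + (((y'.2.1 : ℕ) : ℤ) - ((y.2.1 : ℕ) : ℤ))) y.2.2 y'.2.2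

/-- `ᶜA_{*,*}(θ₁,θ₂) = Σ_{i,j} e^{iθ₁+jθ₂} ᶜA_{i,j}`. -/
noncomputable def cAss (A : ℤ → ℤ → Matrix (Fin s₀) (Fin s₀) ℝ) (c₁ c₂ : ℕ) (θ₁ θ₂ : ℝ) :
    Matrix (Fin c₁ × Fin c₂ × Fin s₀) (Fin c₁ × Fin c₂ × Fin s₀) ℝ :=
  ∑ i ∈ Finset.Icc (-1 : ℤ) 1, ∑ j ∈ Finset.Icc (-1 : ℤ) 1,
    Real.exp ((i : ℝ) * θ₁ + (j : ℝ) * θ₂) • cA A c₁ c₂ i j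



/-! ## Auxiliary development for the proof -/

section Aux

open Finset Filter

attribute [local instance] Matrix.linftyOpNormedRing Matrix.linftyOpNormedAlgebra

variable {s₀ : ℕ}

/-- Exponential weight on `ℤ²`. -/
noncomputable def wt (θ : ℝ × ℝ) (d : ℤ × ℤ) : ℝ≥0∞ :=
  ENNReal.ofReal (Real.exp ((d.1 : ℝ) * θ.1 + (d.2 : ℝ) * θ.2))

lemma wt_add (θ : ℝ × ℝ) (a b : ℤ × ℤ) : wt θ (a + b) = wt θ a * wt θ b := by
  unfold wt
  rw [← ENNReal.ofReal_mul (Real.exp_nonneg _), ← Real.exp_add]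
  congr 2
  simp only [Prod.fst_add, Prod.snd_add]
  push_cast
  ring

@[simp] lemma wt_zero (θ : ℝ × ℝ) : wt θ 0 = 1 := by
  simp [wt]

lemma wt_ne_top (θ : ℝ × ℝ) (d : ℤ × ℤ) : wt θ d ≠ ⊤ := ENNReal.ofReal_ne_top

/-- Entry formula for `Ass`. -/
lemma Ass_apply (A : ℤ → ℤ → Matrix (Fin s₀) (Fin s₀) ℝ) (θ₁ θ₂ : ℝ) (j j' : Fin s₀) :
    Ass A θ₁ θ₂ j j' = ∑ i ∈ Finset.Icc (-1 : ℤ) 1, ∑ l ∈ Finset.Icc (-1 : ℤ) 1,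
      Real.exp ((i : ℝ) * θ₁ + (l : ℝ) * θ₂) * A i l j j' := by
  unfold Ass
  rw [Matrix.sum_apply]
  refine Finset.sum_congr rfl fun i _ => ?_
  rw [Matrix.sum_apply]
  refine Finset.sum_congr rfl fun l _ => ?_
  simp [Matrix.smul_apply]

lemma Ass_nonneg {A : ℤ → ℤ → Matrix (Fin s₀) (Fin s₀) ℝ} (hA : ∀ i j a b, 0 ≤ A i j a b)
    (θ₁ θ₂ : ℝ) (j j' : Fin s₀) : 0 ≤ Ass A θ₁ θ₂ j j' := by
  rw [Ass_apply]
  exact Finset.sum_nonneg fun i _ => Finset.sum_nonneg fun l _ =>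
    mul_nonneg (Real.exp_nonneg _) (hA i l j j')

lemma pow_entry_nonneg {M : Matrix (Fin s₀) (Fin s₀) ℝ} (hM : ∀ i j, 0 ≤ M i j) :
    ∀ (n : ℕ) (i j : Fin s₀), 0 ≤ (M ^ n) i j := by
  intro n
  induction n with
  | zero =>
    intro i j
    rw [pow_zero, Matrix.one_apply]
    split <;> norm_num
  | succ n ih =>
    intro i j
    rw [pow_succ, Matrix.mul_apply]
    exact Finset.sum_nonneg fun k _ => mul_nonneg (ih i k) (hM k j)

lemma pow_entry_le_of_le {M N : Matrix (Fin s₀) (Fin s₀) ℝ} (hM : ∀ i j, 0 ≤ M i j)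
    (h : ∀ i j, M i j ≤ N i j) :
    ∀ (n : ℕ) (i j : Fin s₀), (M ^ n) i j ≤ (N ^ n) i j := by
  have hN : ∀ i j, 0 ≤ N i j := fun i j => (hM i j).trans (h i j)
  intro n
  induction n with
  | zero => intro i j; rw [pow_zero, pow_zero]
  | succ n ih =>
    intro i j
    rw [pow_succ, pow_succ, Matrix.mul_apply, Matrix.mul_apply]
    refine Finset.sum_le_sum fun k _ => ?_
    exact mul_le_mul (ih i k) (h k j) (hM k j) (pow_entry_nonneg hN n i k)

/-- The `ℝ≥0∞`-valued finite kernel `B θ`. -/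
noncomputable def Bk (A : ℤ → ℤ → Matrix (Fin s₀) (Fin s₀) ℝ) (θ : ℝ × ℝ) :
    Fin s₀ → Fin s₀ → ℝ≥0∞ :=
  fun j j' => ENNReal.ofReal (Ass A θ.1 θ.2 j j')

lemma kpow_Bk {A : ℤ → ℤ → Matrix (Fin s₀) (Fin s₀) ℝ} (hA : ∀ i j a b, 0 ≤ A i j a b)
    (θ : ℝ × ℝ) : ∀ (n : ℕ) (j j' : Fin s₀),
      kpow (Bk A θ) n j j' = ENNReal.ofReal ((Ass A θ.1 θ.2 ^ n) j j') := by
  have hnn : ∀ j j' : Fin s₀, 0 ≤ Ass A θ.1 θ.2 j j' := Ass_nonneg hA _ _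
  intro n
  induction n with
  | zero =>
    intro j j'
    rw [pow_zero, Matrix.one_apply]
    show (if j = j' then (1 : ℝ≥0∞) else 0) = _
    split <;> simp
  | succ n ih =>
    intro j j'
    show kmul (Bk A θ) (kpow (Bk A θ) n) j j' = _
    rw [kmul, tsum_fintype]
    have : ∀ k : Fin s₀, Bk A θ j k * kpow (Bk A θ) n k j'
        = ENNReal.ofReal (Ass A θ.1 θ.2 j k * (Ass A θ.1 θ.2 ^ n) k j') := by
      intro k
      rw [ih, Bk, ← ENNReal.ofReal_mul (hnn j k)]
    rw [Finset.sum_congr rfl fun k _ => this k,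
      ← ENNReal.ofReal_sum_of_nonneg fun k _ =>
        mul_nonneg (hnn j k) (pow_entry_nonneg hnn n k j')]
    congr 1
    rw [pow_succ']
    rw [Matrix.mul_apply]

/-- Restriction: powers of `kerPlus` are dominated by powers of `ker`. -/
lemma kpow_kerPlus_le (A : ℤ → ℤ → Matrix (Fin s₀) (Fin s₀) ℝ) :
    ∀ (n : ℕ) (y y' : ℕ × ℕ × Fin s₀),
      kpow (kerPlus A) n y y' ≤
        kpow (ker A) n ((y.1 : ℤ), (y.2.1 : ℤ), y.2.2) ((y'.1 : ℤ), (y'.2.1 : ℤ), y'.2.2) := by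
  intro n
  induction n with
  | zero =>
    intro y y'
    show (if y = y' then (1:ℝ≥0∞) else 0) ≤ (if _ = _ then (1:ℝ≥0∞) else 0)
    by_cases h : y = y'
    · subst h; simp
    · simp [h]
  | succ n ih =>
    intro y y'
    show kmul (kerPlus A) (kpow (kerPlus A) n) y y' ≤
      kmul (ker A) (kpow (ker A) n) _ _
    rw [kmul, kmul]
    have hinj : Function.Injective
        (fun z : ℕ × ℕ × Fin s₀ => ((z.1 : ℤ), (z.2.1 : ℤ), z.2.2)) := by
      rintro ⟨a, b, j⟩ ⟨a', b', j'⟩ h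
      simp only [Prod.mk.injEq, Nat.cast_inj] at h
      exact Prod.ext h.1 (Prod.ext h.2.1 h.2.2)
    calc (∑' k : ℕ × ℕ × Fin s₀, kerPlus A y k * kpow (kerPlus A) n k y')
        ≤ ∑' k : ℕ × ℕ × Fin s₀,
            ker A ((y.1 : ℤ), (y.2.1 : ℤ), y.2.2) ((k.1 : ℤ), (k.2.1 : ℤ), k.2.2) *
            kpow (ker A) n ((k.1 : ℤ), (k.2.1 : ℤ), k.2.2)
              ((y'.1 : ℤ), (y'.2.1 : ℤ), y'.2.2) := by
          refine ENNReal.tsum_le_tsum fun k => ?_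
          have h1 : kerPlus A y k
              = ker A ((y.1 : ℤ), (y.2.1 : ℤ), y.2.2) ((k.1 : ℤ), (k.2.1 : ℤ), k.2.2) := rfl
          rw [h1]
          exact mul_le_mul_right (ih k y') _
      _ ≤ _ :=
          ENNReal.tsum_comp_le_tsum_of_injective hinj
            (fun z => ker A ((y.1 : ℤ), (y.2.1 : ℤ), y.2.2) z *
              kpow (ker A) n z ((y'.1 : ℤ), (y'.2.1 : ℤ), y'.2.2))

/-- Transfer identity: the exponentially weighted sum over the `n`-step kernel of the free
walk equals the `n`-th power of the finite kernel `Bk`. -/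
lemma transfer {A : ℤ → ℤ → Matrix (Fin s₀) (Fin s₀) ℝ} (hA : IsMMRW A) (θ : ℝ × ℝ) :
    ∀ (n : ℕ) (x : ℤ × ℤ) (j j' : Fin s₀),
      (∑' k : ℤ × ℤ, wt θ (k - x) * kpow (ker A) n (x.1, x.2, j) (k.1, k.2, j'))
        = kpow (Bk A θ) n j j' := by
  intro n
  induction n with
  | zero =>
    intro x j j'
    by_cases h : j = j'
    · subst h
      have h1 : ∀ k : ℤ × ℤ, k ≠ x →
          wt θ (k - x) * kpow (ker A) 0 (x.1, x.2, j) (k.1, k.2, j) = 0 := by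
        intro k hk
        have : (x.1, x.2, j) ≠ (k.1, k.2, j) := by
          intro h
          apply hk
          have h1 := congrArg Prod.fst h
          have h2 := congrArg (fun p : ℤ × ℤ × Fin s₀ => p.2.1) h
          exact Prod.ext h1.symm h2.symm
        show wt θ (k - x) * (if (x.1, x.2, j) = (k.1, k.2, j) then (1:ℝ≥0∞) else 0) = 0
        rw [if_neg this, mul_zero]
      rw [tsum_eq_single x h1]
      show wt θ (x - x) * (if (x.1, x.2, j) = (x.1, x.2, j) then (1:ℝ≥0∞) else 0)
        = (if j = j then (1:ℝ≥0∞) else 0)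
      simp
    · have h1 : ∀ k : ℤ × ℤ,
          wt θ (k - x) * kpow (ker A) 0 (x.1, x.2, j) (k.1, k.2, j') = 0 := by
        intro k
        have : (x.1, x.2, j) ≠ (k.1, k.2, j') := by
          simp only [ne_eq, Prod.mk.injEq, not_and]
          intro _ _ hj
          exact h hj
        show wt θ (k - x) * (if (x.1, x.2, j) = (k.1, k.2, j') then (1:ℝ≥0∞) else 0) = 0
        rw [if_neg this, mul_zero]
      rw [tsum_congr h1, tsum_zero]
      show (0:ℝ≥0∞) = (if j = j' then (1:ℝ≥0∞) else 0)
      rw [if_neg h]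
  | succ n ih =>
    intro x j j'
    have lhs1 : ∀ k : ℤ × ℤ,
        wt θ (k - x) * kpow (ker A) (n+1) (x.1, x.2, j) (k.1, k.2, j')
          = ∑' z : ℤ × ℤ × Fin s₀,
              wt θ (k - x) * (ker A (x.1, x.2, j) z * kpow (ker A) n z (k.1, k.2, j')) := by
      intro k
      show wt θ (k - x) * kmul (ker A) (kpow (ker A) n) (x.1, x.2, j) (k.1, k.2, j') = _
      rw [kmul, ENNReal.tsum_mul_left]
    calc (∑' k : ℤ × ℤ, wt θ (k - x) * kpow (ker A) (n+1) (x.1, x.2, j) (k.1, k.2, j'))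
        = ∑' (k : ℤ × ℤ) (z : ℤ × ℤ × Fin s₀),
            wt θ (k - x) * (ker A (x.1, x.2, j) z * kpow (ker A) n z (k.1, k.2, j')) :=
          tsum_congr lhs1
      _ = ∑' (z : ℤ × ℤ × Fin s₀) (k : ℤ × ℤ),
            wt θ (k - x) * (ker A (x.1, x.2, j) z * kpow (ker A) n z (k.1, k.2, j')) :=
          ENNReal.tsum_comm
      _ = ∑' z : ℤ × ℤ × Fin s₀, ker A (x.1, x.2, j) z *
            (wt θ ((z.1, z.2.1) - x) * kpow (Bk A θ) n z.2.2 j') := by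
          refine tsum_congr fun z => ?_
          have hsplit : ∀ k : ℤ × ℤ,
              wt θ (k - x) * (ker A (x.1, x.2, j) z * kpow (ker A) n z (k.1, k.2, j'))
                = ker A (x.1, x.2, j) z *
                  (wt θ ((z.1, z.2.1) - x) * (wt θ (k - (z.1, z.2.1)) *
                    kpow (ker A) n (z.1, z.2.1, z.2.2) (k.1, k.2, j'))) := by
            intro k
            have h1 : k - x = ((z.1, z.2.1) - x) + (k - (z.1, z.2.1)) := by ring
            rw [h1, wt_add]
            ring
          rw [tsum_congr hsplit, ENNReal.tsum_mul_left, ENNReal.tsum_mul_left,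
            ih (z.1, z.2.1) z.2.2 j']
      _ = ∑' (p : (ℤ × ℤ) × Fin s₀), ker A (x.1, x.2, j) (p.1.1, p.1.2, p.2) *
            (wt θ ((p.1.1, p.1.2) - x) * kpow (Bk A θ) n p.2 j') := by
          rw [← (Equiv.prodAssoc ℤ ℤ (Fin s₀)).tsum_eq
            (fun z : ℤ × ℤ × Fin s₀ => ker A (x.1, x.2, j) z *
              (wt θ ((z.1, z.2.1) - x) * kpow (Bk A θ) n z.2.2 j'))]
          rfl
      _ = ∑' (d : ℤ × ℤ), ∑' j₂ : Fin s₀, ker A (x.1, x.2, j) (d.1, d.2, j₂) *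
            (wt θ ((d.1, d.2) - x) * kpow (Bk A θ) n j₂ j') :=
          ENNReal.tsum_prod (f := fun (d : ℤ × ℤ) (j₂ : Fin s₀) => ker A (x.1, x.2, j) (d.1, d.2, j₂) *
            (wt θ ((d.1, d.2) - x) * kpow (Bk A θ) n j₂ j'))
      _ = ∑' (d : ℤ × ℤ), ∑ j₂ : Fin s₀, ker A (x.1, x.2, j) (d.1, d.2, j₂) *
            (wt θ ((d.1, d.2) - x) * kpow (Bk A θ) n j₂ j') :=
          tsum_congr fun d => tsum_fintype _
      _ = ∑ j₂ : Fin s₀, ∑' (d : ℤ × ℤ), ker A (x.1, x.2, j) (d.1, d.2, j₂) *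
            (wt θ ((d.1, d.2) - x) * kpow (Bk A θ) n j₂ j') :=
          Summable.tsum_finsetSum fun j₂ _ => ENNReal.summable
      _ = ∑ j₂ : Fin s₀, Bk A θ j j₂ * kpow (Bk A θ) n j₂ j' := by
          refine Finset.sum_congr rfl fun j₂ _ => ?_
          have hmc : ∀ d : ℤ × ℤ, ker A (x.1, x.2, j) (d.1, d.2, j₂) *
              (wt θ ((d.1, d.2) - x) * kpow (Bk A θ) n j₂ j')
              = (ker A (x.1, x.2, j) (d.1, d.2, j₂) * wt θ ((d.1, d.2) - x)) *
                kpow (Bk A θ) n j₂ j' := fun d => by ring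
          rw [tsum_congr hmc, ENNReal.tsum_mul_right]
          congr 1
          calc (∑' d : ℤ × ℤ, ker A (x.1, x.2, j) (d.1, d.2, j₂) * wt θ ((d.1, d.2) - x))
              = ∑' c : ℤ × ℤ, ker A (x.1, x.2, j) ((c + x).1, (c + x).2, j₂) * wt θ c := by
                rw [← (Equiv.addRight x).tsum_eq
                  (fun d : ℤ × ℤ => ker A (x.1, x.2, j) (d.1, d.2, j₂) * wt θ (d - x))]
                refine tsum_congr fun c => ?_
                simp only [Equiv.coe_addRight, add_sub_cancel_right]
            _ = ∑' c : ℤ × ℤ, ENNReal.ofReal (A c.1 c.2 j j₂) * wt θ c := by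
                refine tsum_congr fun c => ?_
                have : ker A (x.1, x.2, j) ((c + x).1, (c + x).2, j₂)
                    = ENNReal.ofReal (A c.1 c.2 j j₂) := by
                  show ENNReal.ofReal (A ((c + x).1 - x.1) ((c + x).2 - x.2) j j₂) = _
                  simp [Prod.fst_add, Prod.snd_add]
                rw [this]
            _ = ∑ c ∈ (Finset.Icc (-1 : ℤ) 1) ×ˢ (Finset.Icc (-1 : ℤ) 1),
                  ENNReal.ofReal (A c.1 c.2 j j₂) * wt θ c := by
                refine tsum_eq_sum fun c hc => ?_
                have : A c.1 c.2 = 0 := by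
                  apply hA.skipfree
                  rw [Finset.mem_product] at hc
                  tauto
                rw [this]
                simp
            _ = Bk A θ j j₂ := by
                rw [Finset.sum_product]
                unfold Bk
                rw [Ass_apply, ENNReal.ofReal_sum_of_nonneg (fun i _ =>
                  Finset.sum_nonneg fun l _ =>
                    mul_nonneg (Real.exp_nonneg _) (hA.nonneg i l j j₂))]
                refine Finset.sum_congr rfl fun i _ => ?_
                rw [ENNReal.ofReal_sum_of_nonneg (fun l _ =>
                  mul_nonneg (Real.exp_nonneg _) (hA.nonneg i l j j₂))]
                refine Finset.sum_congr rfl fun l _ => ?_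
                rw [ENNReal.ofReal_mul (Real.exp_nonneg _)]
                rw [mul_comm]
                rfl
      _ = kpow (Bk A θ) (n+1) j j' := by
          show _ = kmul (Bk A θ) (kpow (Bk A θ) n) j j'
          rw [kmul, tsum_fintype]

end Aux


section Aux2

open Finset Filter

attribute [local instance] Matrix.linftyOpNormedRing Matrix.linftyOpNormedAlgebra

variable {s₀ : ℕ}

lemma entry_norm_le_linfty (M : Matrix (Fin s₀) (Fin s₀) ℂ) (i j : Fin s₀) :
    ‖M i j‖ ≤ ‖M‖ := by
  have h1 : ‖M i j‖₊ ≤ ∑ k, ‖M i k‖₊ :=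
    Finset.single_le_sum (f := fun k => ‖M i k‖₊) (fun k _ => by positivity) (Finset.mem_univ j)
  have h2 : (∑ k, ‖M i k‖₊) ≤ Finset.univ.sup fun i => ∑ k, ‖M i k‖₊ :=
    Finset.le_sup (f := fun i => ∑ k, ‖M i k‖₊) (Finset.mem_univ i)
  have h3 := h1.trans h2
  rw [Matrix.linfty_opNorm_def]
  exact_mod_cast h3

lemma map_ofReal_pow (M : Matrix (Fin s₀) (Fin s₀) ℝ) :
    ∀ n : ℕ, (M.map Complex.ofReal) ^ n = (M ^ n).map Complex.ofReal := by
  intro n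
  induction n with
  | zero =>
    rw [pow_zero, pow_zero]
    ext i j
    rw [Matrix.map_apply, Matrix.one_apply, Matrix.one_apply]
    split <;> simp
  | succ n ih =>
    rw [pow_succ, pow_succ, ih]
    ext i j
    rw [Matrix.map_apply, Matrix.mul_apply, Matrix.mul_apply]
    push_cast
    refine Finset.sum_congr rfl fun k _ => ?_
    rw [Matrix.map_apply, Matrix.map_apply]

/-- If `spr(A_{*,*}(θ)) < 1`, then for some `δ > 0` the series
`Σ_n (A_{*,*}(θ+δ))ⁿ` converges entrywise. -/
lemma summable_geom_bound (hs : 0 < s₀) {A : ℤ → ℤ → Matrix (Fin s₀) (Fin s₀) ℝ}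
    (hA : IsMMRW A) {θ : ℝ × ℝ} (hθ : chi A θ.1 θ.2 < 1) :
    ∃ δ : ℝ, 0 < δ ∧ ∀ j j' : Fin s₀,
      (∑' n : ℕ, ENNReal.ofReal ((Ass A (θ.1 + δ) (θ.2 + δ) ^ n) j j')) ≠ ⊤ := by
  haveI : Nonempty (Fin s₀) := ⟨⟨0, hs⟩⟩
  haveI : CompleteSpace (Matrix (Fin s₀) (Fin s₀) ℂ) := FiniteDimensional.complete ℝ _
  set N : Matrix (Fin s₀) (Fin s₀) ℂ := (Ass A θ.1 θ.2).map Complex.ofReal with hN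
  -- spectral radius below 1
  have hb : ∀ z ∈ spectrum ℂ N, ‖z‖ ≤ chi A θ.1 θ.2 := by
    intro z hz
    have hm : ‖z‖ ∈ (fun z => ‖z‖) '' spectrum ℂ N := ⟨z, hz, rfl⟩
    have hbdd : BddAbove ((fun z => ‖z‖) '' spectrum ℂ N) := by
      refine ⟨‖N‖, ?_⟩
      rintro y ⟨u, hu, rfl⟩
      show ‖u‖ ≤ ‖N‖
      exact spectrum.norm_le_norm_of_mem hu
    calc ‖z‖ = ‖z‖ := rfl
      _ ≤ _ := le_csSup hbdd hm
  have hspr : spectralRadius ℂ N < 1 := by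
    have h1 : spectralRadius ℂ N ≤ ENNReal.ofReal (chi A θ.1 θ.2) := by
      unfold spectralRadius
      refine iSup₂_le fun z hz => ?_
      rw [← ENNReal.ofReal_coe_nnreal, coe_nnnorm]
      exact ENNReal.ofReal_le_ofReal (hb z hz)
    exact lt_of_le_of_lt h1 (ENNReal.ofReal_lt_one.mpr hθ)
  obtain ⟨c, hc1, hc2⟩ := exists_between hspr
  have hctop : c ≠ ⊤ := (lt_of_lt_of_le hc2 le_top).ne
  have hev : ∀ᶠ n : ℕ in atTop, (‖N ^ n‖₊ : ℝ≥0∞) ^ (1 / (n : ℝ)) < c :=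
    (spectrum.pow_nnnorm_pow_one_div_tendsto_nhds_spectralRadius N).eventually_lt_const hc1
  obtain ⟨N₀, hN₀⟩ := eventually_atTop.1 (hev.and (eventually_ge_atTop 1))
  set cR : ℝ := c.toReal with hcR
  have hcR1 : cR < 1 := by
    have := (ENNReal.toReal_lt_toReal hctop ENNReal.one_ne_top).mpr hc2
    simpa using this
  have hreal : ∀ n, N₀ ≤ n → ‖N ^ n‖ ≤ cR ^ n := by
    intro n hn
    obtain ⟨hlt, hn1⟩ := hN₀ n hn
    have hn0 : (0 : ℝ) < (n : ℝ) := by exact_mod_cast hn1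
    have h3 : (((‖N ^ n‖₊ : ℝ≥0∞) ^ (1 / (n : ℝ))) ^ (n : ℝ)) < c ^ (n : ℝ) :=
      ENNReal.rpow_lt_rpow hlt hn0
    rw [← ENNReal.rpow_mul, one_div_mul_cancel (ne_of_gt hn0), ENNReal.rpow_one,
      ENNReal.rpow_natCast] at h3
    have h4 := ENNReal.toReal_mono (ENNReal.pow_ne_top hctop) h3.le
    rwa [ENNReal.toReal_pow, ENNReal.coe_toReal, coe_nnnorm] at h4
  set cR' : ℝ := max cR (1/2) with hcR'
  have hcR'0 : 0 < cR' := lt_of_lt_of_le (by norm_num) (le_max_right _ _)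
  have hcR'1 : cR' < 1 := max_lt hcR1 (by norm_num)
  set K : ℝ := (1 + cR') / (2 * cR') with hKdef
  have hK1 : 1 < K := by
    rw [hKdef, lt_div_iff₀ (by positivity)]
    linarith
  have hK0 : 0 < K := lt_trans one_pos hK1
  set δ : ℝ := Real.log K / 2 with hδdef
  have hδ : 0 < δ := div_pos (Real.log_pos hK1) two_pos
  have hexp : Real.exp (2 * δ) = K := by
    rw [hδdef]
    rw [show 2 * (Real.log K / 2) = Real.log K by ring]
    exact Real.exp_log hK0
  set ρ : ℝ := (1 + cR') / 2 with hρdef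
  have hρ0 : 0 ≤ ρ := by positivity
  have hρ1 : ρ < 1 := by rw [hρdef]; linarith
  have hKc : K * cR' = ρ := by
    rw [hKdef, hρdef]
    field_simp
  -- entrywise bounds
  have hshift : ∀ j j' : Fin s₀,
      Ass A (θ.1 + δ) (θ.2 + δ) j j' ≤ (K • Ass A θ.1 θ.2) j j' := by
    intro j j'
    rw [Matrix.smul_apply, smul_eq_mul, Ass_apply, Ass_apply, Finset.mul_sum]
    refine Finset.sum_le_sum fun i hi => ?_
    rw [Finset.mul_sum]
    refine Finset.sum_le_sum fun l hl => ?_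
    have hi1 : (i : ℝ) ≤ 1 := by exact_mod_cast (Finset.mem_Icc.mp hi).2
    have hl1 : (l : ℝ) ≤ 1 := by exact_mod_cast (Finset.mem_Icc.mp hl).2
    rw [← hexp, ← mul_assoc, ← Real.exp_add]
    refine mul_le_mul_of_nonneg_right ?_ (hA.nonneg i l j j')
    refine Real.exp_le_exp.mpr ?_
    nlinarith [mul_nonneg (sub_nonneg.mpr hi1) hδ.le, mul_nonneg (sub_nonneg.mpr hl1) hδ.le]
  have hentry : ∀ (n : ℕ) (j j' : Fin s₀), (Ass A θ.1 θ.2 ^ n) j j' ≤ ‖N ^ n‖ := by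
    intro n j j'
    have h1 : (Ass A θ.1 θ.2 ^ n) j j' ≤ ‖((Ass A θ.1 θ.2 ^ n).map Complex.ofReal) j j'‖ := by
      rw [Matrix.map_apply, Complex.norm_real]
      exact Real.le_norm_self _
    rw [← map_ofReal_pow] at h1
    exact h1.trans (entry_norm_le_linfty _ j j')
  have hmain : ∀ (n : ℕ), N₀ ≤ n → ∀ j j' : Fin s₀,
      (Ass A (θ.1 + δ) (θ.2 + δ) ^ n) j j' ≤ ρ ^ n := by
    intro n hn j j'
    have h1 : (Ass A (θ.1 + δ) (θ.2 + δ) ^ n) j j' ≤ ((K • Ass A θ.1 θ.2) ^ n) j j' :=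
      pow_entry_le_of_le (Ass_nonneg hA.nonneg _ _) hshift n j j'
    have h2 : ((K • Ass A θ.1 θ.2) ^ n) j j' = K ^ n * (Ass A θ.1 θ.2 ^ n) j j' := by
      rw [smul_pow, Matrix.smul_apply, smul_eq_mul]
    have h3 : (Ass A θ.1 θ.2 ^ n) j j' ≤ cR' ^ n := by
      refine le_trans (hentry n j j') (le_trans (hreal n hn) ?_)
      exact pow_le_pow_left₀ ENNReal.toReal_nonneg (le_max_left _ _) n
    calc (Ass A (θ.1 + δ) (θ.2 + δ) ^ n) j j' ≤ K ^ n * (Ass A θ.1 θ.2 ^ n) j j' :=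
          h1.trans_eq h2
      _ ≤ K ^ n * cR' ^ n := by
          refine mul_le_mul_of_nonneg_left h3 (pow_nonneg hK0.le n)
      _ = ρ ^ n := by rw [← mul_pow, hKc]
  refine ⟨δ, hδ, fun j j' => ?_⟩
  set g : ℕ → ℝ≥0∞ := fun n => ENNReal.ofReal ((Ass A (θ.1 + δ) (θ.2 + δ) ^ n) j j') with hg
  set ρ' : ℝ≥0∞ := ENNReal.ofReal ρ with hρ'
  have hρ'1 : ρ' < 1 := ENNReal.ofReal_lt_one.mpr hρ1
  have hsplit : ∀ n : ℕ, g n ≤ (if n < N₀ then g n else 0) + (if N₀ ≤ n then ρ' ^ n else 0) := by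
    intro n
    by_cases h : n < N₀
    · rw [if_pos h]
      exact le_add_right (le_refl _)
    · rw [if_neg h, if_pos (le_of_not_gt h), zero_add, hg, hρ',
        ← ENNReal.ofReal_pow hρ0]
      exact ENNReal.ofReal_le_ofReal (hmain n (le_of_not_gt h) j j')
  have h1 : (∑' n, g n) ≤ (∑' n, if n < N₀ then g n else 0) +
      (∑' n, if N₀ ≤ n then ρ' ^ n else 0) := by
    refine le_trans (ENNReal.tsum_le_tsum hsplit) ?_
    rw [ENNReal.tsum_add]
  have h2 : (∑' n, if n < N₀ then g n else 0) ≠ ⊤ := by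
    rw [tsum_eq_sum (s := Finset.range N₀) (fun n hn => by
      rw [if_neg (by simpa using hn)])]
    refine (ENNReal.sum_lt_top.mpr ?_).ne
    intro n _
    split
    · exact ENNReal.ofReal_lt_top
    · simp
  have h3 : (∑' n, if N₀ ≤ n then ρ' ^ n else 0) ≠ ⊤ := by
    have hle : ∀ n : ℕ, (if N₀ ≤ n then ρ' ^ n else 0) ≤ ρ' ^ n := by
      intro n; split
      · exact le_refl _
      · positivity
    refine ne_top_of_le_ne_top ?_ (ENNReal.tsum_le_tsum hle)
    rw [ENNReal.tsum_geometric]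
    exact ENNReal.inv_ne_top.mpr (tsub_pos_of_lt hρ'1).ne'
  exact ne_top_of_le_ne_top (ENNReal.add_ne_top.mpr ⟨h2, h3⟩) h1

/-- Domination of `Phi` by the geometric series of `Ass`. -/
lemma Phi_le_aux {A : ℤ → ℤ → Matrix (Fin s₀) (Fin s₀) ℝ} (hA : IsMMRW A)
    (x : ℕ × ℕ) (θ'' θ' : ℝ × ℝ) (h1 : θ''.1 ≤ θ'.1) (h2 : θ''.2 ≤ θ'.2) (j j' : Fin s₀) :
    Phi A x θ'' j j' ≤ wt θ' ((x.1 : ℤ), (x.2 : ℤ)) *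
      ∑' n : ℕ, ENNReal.ofReal ((Ass A θ'.1 θ'.2 ^ n) j j') := by
  have hwt : ∀ k : ℕ × ℕ,
      ENNReal.ofReal (Real.exp ((k.1 : ℝ) * θ''.1 + (k.2 : ℝ) * θ''.2))
        ≤ wt θ' ((k.1 : ℤ), (k.2 : ℤ)) := by
    intro k
    unfold wt
    push_cast
    refine ENNReal.ofReal_le_ofReal (Real.exp_le_exp.mpr ?_)
    have := mul_le_mul_of_nonneg_left h1 (Nat.cast_nonneg k.1 : (0:ℝ) ≤ k.1)
    have := mul_le_mul_of_nonneg_left h2 (Nat.cast_nonneg k.2 : (0:ℝ) ≤ k.2)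
    linarith
  have hinj : Function.Injective (fun k : ℕ × ℕ => ((k.1 : ℤ), (k.2 : ℤ))) := by
    rintro ⟨a, b⟩ ⟨a', b'⟩ h
    simp only [Prod.mk.injEq, Nat.cast_inj] at h
    exact Prod.ext h.1 h.2
  calc Phi A x θ'' j j'
      ≤ ∑' k : ℕ × ℕ, wt θ' ((k.1 : ℤ), (k.2 : ℤ)) * occ A (x.1, x.2, j) (k.1, k.2, j') := by
        unfold Phi
        exact ENNReal.tsum_le_tsum fun k => mul_le_mul_left (hwt k) _
    _ = ∑' (k : ℕ × ℕ) (n : ℕ), wt θ' ((k.1 : ℤ), (k.2 : ℤ)) *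
          kpow (kerPlus A) n (x.1, x.2, j) (k.1, k.2, j') := by
        refine tsum_congr fun k => ?_
        unfold occ
        rw [ENNReal.tsum_mul_left]
    _ = ∑' (n : ℕ) (k : ℕ × ℕ), wt θ' ((k.1 : ℤ), (k.2 : ℤ)) *
          kpow (kerPlus A) n (x.1, x.2, j) (k.1, k.2, j') := ENNReal.tsum_comm
    _ ≤ ∑' n : ℕ, wt θ' ((x.1 : ℤ), (x.2 : ℤ)) * kpow (Bk A θ') n j j' := by
        refine ENNReal.tsum_le_tsum fun n => ?_
        calc (∑' k : ℕ × ℕ, wt θ' ((k.1 : ℤ), (k.2 : ℤ)) *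
              kpow (kerPlus A) n (x.1, x.2, j) (k.1, k.2, j'))
            ≤ ∑' k : ℕ × ℕ, wt θ' ((x.1 : ℤ), (x.2 : ℤ)) *
                (wt θ' (((k.1 : ℤ), (k.2 : ℤ)) - ((x.1 : ℤ), (x.2 : ℤ))) *
                  kpow (ker A) n ((x.1 : ℤ), (x.2 : ℤ), j) ((k.1 : ℤ), (k.2 : ℤ), j')) := by
              refine ENNReal.tsum_le_tsum fun k => ?_
              have hw : wt θ' ((k.1 : ℤ), (k.2 : ℤ))
                  = wt θ' ((x.1 : ℤ), (x.2 : ℤ)) *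
                    wt θ' (((k.1 : ℤ), (k.2 : ℤ)) - ((x.1 : ℤ), (x.2 : ℤ))) := by
                rw [← wt_add]
                congr 1
                ring
              rw [hw, mul_assoc]
              exact mul_le_mul_right (mul_le_mul_right (kpow_kerPlus_le A n (x.1, x.2, j)
                (k.1, k.2, j')) _) _
          _ = wt θ' ((x.1 : ℤ), (x.2 : ℤ)) * ∑' k : ℕ × ℕ,
                wt θ' (((k.1 : ℤ), (k.2 : ℤ)) - ((x.1 : ℤ), (x.2 : ℤ))) *
                  kpow (ker A) n ((x.1 : ℤ), (x.2 : ℤ), j) ((k.1 : ℤ), (k.2 : ℤ), j') :=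
              ENNReal.tsum_mul_left
          _ ≤ wt θ' ((x.1 : ℤ), (x.2 : ℤ)) * ∑' z : ℤ × ℤ,
                wt θ' (z - ((x.1 : ℤ), (x.2 : ℤ))) *
                  kpow (ker A) n ((x.1 : ℤ), (x.2 : ℤ), j) (z.1, z.2, j') := by
              refine mul_le_mul_right ?_ _
              exact ENNReal.tsum_comp_le_tsum_of_injective hinj
                (fun z => wt θ' (z - ((x.1 : ℤ), (x.2 : ℤ))) *
                  kpow (ker A) n ((x.1 : ℤ), (x.2 : ℤ), j) (z.1, z.2, j'))
          _ = wt θ' ((x.1 : ℤ), (x.2 : ℤ)) * kpow (Bk A θ') n j j' := by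
              rw [transfer hA θ' n ((x.1 : ℤ), (x.2 : ℤ)) j j']
    _ = wt θ' ((x.1 : ℤ), (x.2 : ℤ)) *
          ∑' n : ℕ, ENNReal.ofReal ((Ass A θ'.1 θ'.2 ^ n) j j') := by
        rw [ENNReal.tsum_mul_left]
        congr 1
        exact tsum_congr fun n => kpow_Bk hA.nonneg θ' n j j'

end Aux2

/-- Lemma 4.3: under Assumptions 1, 2 and 3, for every `x ∈ ℤ₊²`,
`Γ ⊂ 𝒟_x`, and hence `𝒟 ⊂ 𝒟_x`. -/
theorem gamma_subset_domPhi {s₀ : ℕ} (hs : 0 < s₀)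
    (A : ℤ → ℤ → Matrix (Fin s₀) (Fin s₀) ℝ) (hA : IsMMRW A)
    (h1 : Assumption1 A) (h2 : Assumption2 A) (h3 : Assumption3 A) :
    ∀ x : ℕ × ℕ, GammaSet A ⊆ domPhi A x ∧ Dset A ⊆ domPhi A x := by
  intro x
  have key : ∀ t : ℝ × ℝ, t ∈ GammaSet A → ∃ δ : ℝ, 0 < δ ∧
      ∀ θ'' : ℝ × ℝ, θ''.1 < t.1 + δ → θ''.2 < t.2 + δ →
        θ'' ∈ {θ : ℝ × ℝ | ∀ j j', Phi A x θ j j' ≠ ⊤} := by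
    intro t ht
    obtain ⟨δ, hδ, hfin⟩ := summable_geom_bound hs hA ht
    refine ⟨δ, hδ, fun θ'' hθ1 hθ2 j j' => ?_⟩
    have hb := Phi_le_aux hA x θ'' (t.1 + δ, t.2 + δ) hθ1.le hθ2.le j j'
    exact ne_top_of_le_ne_top (ENNReal.mul_ne_top (wt_ne_top _ _) (hfin j j')) hb
  constructor
  · intro θ hθ
    obtain ⟨δ, hδ, hS⟩ := key θ hθ
    rw [domPhi, mem_interior]
    refine ⟨Set.Iio (θ.1 + δ) ×ˢ Set.Iio (θ.2 + δ), ?_, isOpen_Iio.prod isOpen_Iio, ?_⟩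
    · rintro θ'' ⟨ha, hb⟩
      exact hS θ'' ha hb
    · exact ⟨show θ.1 < θ.1 + δ by linarith, show θ.2 < θ.2 + δ by linarith⟩
  · intro θ hθ
    obtain ⟨t, ht, h1, h2⟩ := hθ
    obtain ⟨δ, hδ, hS⟩ := key t ht
    rw [domPhi, mem_interior]
    refine ⟨Set.Iio (t.1 + δ) ×ˢ Set.Iio (t.2 + δ), ?_, isOpen_Iio.prod isOpen_Iio, ?_⟩
    · rintro θ'' ⟨ha, hb⟩
      exact hS θ'' ha hb
    · exact ⟨show θ.1 < t.1 + δ by linarith, show θ.2 < t.2 + δ by linarith⟩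
end MMRW2d
end

section
/- Let C₋₁, C₀, C₁ be m×m nonnegative matrices (m finite or countably infinite) such that (C₋₁+C₀+C₁)ⁿ is entrywise finite for every n∈ℤ₊ and C₋₁+C₀+C₁ is irreducible. For θ∈ℝ set C_*(θ)=e^{−θ}C₋₁+C₀+e^{θ}C₁, and for a positive integer k let C^[k](θ) be the k×k block matrix with blocks C₀ on the diagonal, C₁ on the superdiagonal, C₋₁ on the subdiagonal, e^{−θ}C₋₁ in the (1,k) block and e^{θ}C₁ in the (k,1) block. Then cp(C_*(θ)) = cp(C^[k](kθ)). -/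
open scoped ENNReal

namespace MMRW2d

variable {s₀ : ℕ}

/-- `C_*(θ) = e^{−θ}C₋₁ + C₀ + e^{θ}C₁`. -/
noncomputable def Cstar {ι : Type*} (Cm C0 Cp : ι → ι → ℝ≥0∞) (θ : ℝ) : ι → ι → ℝ≥0∞ :=
  fun i j => ENNReal.ofReal (Real.exp (-θ)) * Cm i j + C0 i j +
    ENNReal.ofReal (Real.exp θ) * Cp i j

/-- The `k×k` block matrix `C^{[k]}(θ)` with blocks `C₀` on the diagonal, `C₁` on the
superdiagonal, `C₋₁` on the subdiagonal, `e^{−θ}C₋₁` in the `(1,k)` block and `e^{θ}C₁` in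
the `(k,1)` block: equivalently, for `d ∈ {−1,0,1}` the block `C_d` sits at column
`(a+d) mod k` of row `a`, weighted by `e^{θ·((a+d) div k)}`. -/
noncomputable def Cblk {ι : Type*} (Cm C0 Cp : ι → ι → ℝ≥0∞) (k : ℕ) (θ : ℝ) :
    (Fin k × ι) → (Fin k × ι) → ℝ≥0∞ :=
  fun a b => ∑ d ∈ Finset.Icc (-1 : ℤ) 1,
    if ((b.1 : ℕ) : ℤ) = (((a.1 : ℕ) : ℤ) + d) % (k : ℤ) then
      ENNReal.ofReal (Real.exp (θ * ((((a.1 : ℕ) : ℤ) + d) / (k : ℤ) : ℤ))) *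
        (if d = -1 then Cm a.2 b.2 else if d = 0 then C0 a.2 b.2 else Cp a.2 b.2)
    else 0


/-! ### Auxiliary lemmas for Statement 19 -/

/-- The "circulant" block matrix with blocks `e^{θd} C_d`. -/
noncomputable def circAux {ι : Type*} (Cm C0 Cp : ι → ι → ℝ≥0∞) (k : ℕ) (θ : ℝ) :
    (Fin k × ι) → (Fin k × ι) → ℝ≥0∞ :=
  fun a b => ∑ d ∈ Finset.Icc (-1 : ℤ) 1,
    if ((b.1 : ℕ) : ℤ) = (((a.1 : ℕ) : ℤ) + d) % (k : ℤ) then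
      ENNReal.ofReal (Real.exp (θ * (d : ℝ))) *
        (if d = -1 then Cm a.2 b.2 else if d = 0 then C0 a.2 b.2 else Cp a.2 b.2)
    else 0

lemma kpow_conj_aux {α : Type*} [DecidableEq α] (A : α → α → ℝ≥0∞) (d e : α → ℝ≥0∞)
    (hde : ∀ i, d i * e i = 1) (n : ℕ) (i j : α) :
    kpow (fun a b => d a * A a b * e b) n i j = d i * kpow A n i j * e j := by
  induction n generalizing i j with
  | zero =>
    simp only [kpow]
    by_cases h : i = j
    · subst h; simp [hde i]
    · simp [h]
  | succ n ih =>
    simp only [kpow, kmul]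
    have : ∀ l, (d i * A i l * e l) * kpow (fun a b => d a * A a b * e b) n l j
        = d i * ((A i l * kpow A n l j) * e j) := by
      intro l
      rw [ih]
      have h1 : e l * d l = 1 := by rw [mul_comm]; exact hde l
      calc (d i * A i l * e l) * (d l * kpow A n l j * e j)
          = d i * ((A i l * ((e l * d l) * kpow A n l j)) * e j) := by ring
        _ = d i * ((A i l * kpow A n l j) * e j) := by rw [h1, one_mul]
    rw [tsum_congr this, ENNReal.tsum_mul_left, ENNReal.tsum_mul_right, ← mul_assoc]

lemma cp_conj_aux {α : Type*} [DecidableEq α] (A : α → α → ℝ≥0∞) (d e : α → ℝ≥0∞)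
    (hde : ∀ i, d i * e i = 1) :
    cp (fun a b => d a * A a b * e b) = cp A := by
  have hd0 : ∀ i, d i ≠ 0 := fun i h => by simpa [h] using hde i
  have hdt : ∀ i, d i ≠ ⊤ := by
    intro i h
    have := hde i
    rw [h] at this
    rcases eq_or_ne (e i) 0 with h0 | h0
    · simp [h0] at this
    · rw [ENNReal.top_mul h0] at this; exact ENNReal.top_ne_one this
  have he0 : ∀ i, e i ≠ 0 := fun i h => by simpa [h] using hde i
  have het : ∀ i, e i ≠ ⊤ := by
    intro i h
    have := hde i
    rw [h, ENNReal.mul_top (hd0 i)] at this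
    exact ENNReal.top_ne_one this
  unfold cp
  congr 1
  ext r
  have key : ∀ i j, (∑' n : ℕ, r ^ n * kpow (fun a b => d a * A a b * e b) n i j)
      = d i * (∑' n : ℕ, r ^ n * kpow A n i j) * e j := by
    intro i j
    have : ∀ n : ℕ, r ^ n * kpow (fun a b => d a * A a b * e b) n i j
        = d i * ((r ^ n * kpow A n i j) * e j) := by
      intro n; rw [kpow_conj_aux A d e hde]; ring
    rw [tsum_congr this, ENNReal.tsum_mul_left, ENNReal.tsum_mul_right, ← mul_assoc]
  simp only [Set.mem_setOf_eq]
  constructor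
  · intro h i j
    have hh := h i j
    rw [key i j] at hh
    intro hx
    rw [hx, ENNReal.mul_top (hd0 i), ENNReal.top_mul (he0 j)] at hh
    exact hh rfl
  · intro h i j
    rw [key i j]
    exact ENNReal.mul_ne_top (ENNReal.mul_ne_top (hdt i) (h i j)) (het j)

lemma sum_fin_ite_aux {k : ℕ} (m : ℤ) (hm0 : 0 ≤ m) (hmk : m < k) (x : ℝ≥0∞) :
    ∑ c : Fin k, (if ((c : ℕ) : ℤ) = m then x else 0) = x := by
  have hk : m.toNat < k := by omega
  have heq : ∀ c : Fin k, (((c : ℕ) : ℤ) = m) ↔ c = ⟨m.toNat, hk⟩ := by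
    intro c
    constructor
    · intro h; ext; simp only []; omega
    · intro h; subst h; simp only []; omega
  calc ∑ c : Fin k, (if ((c : ℕ) : ℤ) = m then x else 0)
      = ∑ c : Fin k, (if c = ⟨m.toNat, hk⟩ then x else 0) :=
        Finset.sum_congr rfl fun c _ => by simp only [heq c]
    _ = x := by simp

lemma circAux_row_sum {ι : Type*} (Cm C0 Cp : ι → ι → ℝ≥0∞) (k : ℕ) (hk : 0 < k) (θ : ℝ)
    (a : Fin k) (i l : ι) :
    ∑ c : Fin k, circAux Cm C0 Cp k θ (a, i) (c, l) = Cstar Cm C0 Cp θ i l := by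
  unfold circAux
  rw [Finset.sum_comm]
  have hIcc : Finset.Icc (-1 : ℤ) 1 = ({-1, 0, 1} : Finset ℤ) := by decide
  rw [hIcc]
  have hknz : (k : ℤ) ≠ 0 := by exact_mod_cast hk.ne'
  have hsum : ∀ d : ℤ, ∀ x : ℝ≥0∞,
      ∑ c : Fin k, (if ((c : ℕ) : ℤ) = (((a : ℕ) : ℤ) + d) % (k : ℤ) then x else 0) = x := by
    intro d x
    exact sum_fin_ite_aux _ (Int.emod_nonneg _ hknz)
      (Int.emod_lt_of_pos _ (by exact_mod_cast hk)) x
  rw [Finset.sum_insert (by decide), Finset.sum_insert (by decide), Finset.sum_singleton]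
  dsimp only
  rw [hsum (-1), hsum 0, hsum 1]
  simp only [Cstar]
  norm_num [Real.exp_zero]
  rw [add_assoc]

lemma kpow_circAux_sum {ι : Type*} [DecidableEq ι]
    (Cm C0 Cp : ι → ι → ℝ≥0∞) (k : ℕ) (hk : 0 < k) (θ : ℝ) (n : ℕ)
    (a : Fin k) (i j : ι) :
    ∑ b : Fin k, kpow (circAux Cm C0 Cp k θ) n (a, i) (b, j)
      = kpow (Cstar Cm C0 Cp θ) n i j := by
  induction n generalizing a i j with
  | zero =>
    simp only [kpow, Prod.mk.injEq, Prod.ext_iff]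
    by_cases h : i = j
    · subst h; simp
    · simp [h]
  | succ n ih =>
    simp only [kpow, kmul]
    calc ∑ b : Fin k, ∑' p : Fin k × ι,
            circAux Cm C0 Cp k θ (a, i) p * kpow (circAux Cm C0 Cp k θ) n p (b, j)
        = ∑' p : Fin k × ι, ∑ b : Fin k,
            circAux Cm C0 Cp k θ (a, i) p * kpow (circAux Cm C0 Cp k θ) n p (b, j) := by
          rw [← tsum_fintype (L := SummationFilter.unconditional _), ENNReal.tsum_comm]
          exact tsum_congr fun p => tsum_fintype _
      _ = ∑' p : Fin k × ι, circAux Cm C0 Cp k θ (a, i) p * kpow (Cstar Cm C0 Cp θ) n p.2 j := by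
          refine tsum_congr fun p => ?_
          rw [← Finset.mul_sum, ih p.1 p.2 j]
      _ = ∑' c : Fin k, ∑' l : ι,
            circAux Cm C0 Cp k θ (a, i) (c, l) * kpow (Cstar Cm C0 Cp θ) n l j :=
          ENNReal.tsum_prod (f := fun c l => circAux Cm C0 Cp k θ (a, i) (c, l) *
            kpow (Cstar Cm C0 Cp θ) n l j)
      _ = ∑' l : ι, ∑ c : Fin k,
            circAux Cm C0 Cp k θ (a, i) (c, l) * kpow (Cstar Cm C0 Cp θ) n l j := by
          rw [ENNReal.tsum_comm]
          exact tsum_congr fun l => tsum_fintype _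
      _ = ∑' l : ι, Cstar Cm C0 Cp θ i l * kpow (Cstar Cm C0 Cp θ) n l j := by
          refine tsum_congr fun l => ?_
          rw [← Finset.sum_mul, circAux_row_sum Cm C0 Cp k hk θ a i l]

lemma Cblk_eq_conj_aux {ι : Type*} (Cm C0 Cp : ι → ι → ℝ≥0∞) (k : ℕ) (θ : ℝ)
    (p q : Fin k × ι) :
    Cblk Cm C0 Cp k ((k : ℝ) * θ) p q
      = ENNReal.ofReal (Real.exp (θ * ((p.1 : ℕ) : ℝ))) * circAux Cm C0 Cp k θ p q *
        ENNReal.ofReal (Real.exp (-(θ * ((q.1 : ℕ) : ℝ)))) := by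
  unfold Cblk circAux
  rw [Finset.mul_sum, Finset.sum_mul]
  refine Finset.sum_congr rfl fun d _ => ?_
  by_cases h : ((q.1 : ℕ) : ℤ) = (((p.1 : ℕ) : ℤ) + d) % (k : ℤ)
  · rw [if_pos h, if_pos h]
    have hz : (k : ℤ) * ((((p.1 : ℕ) : ℤ) + d) / (k : ℤ))
        = ((p.1 : ℕ) : ℤ) + d - ((q.1 : ℕ) : ℤ) := by
      have := Int.mul_ediv_add_emod (((p.1 : ℕ) : ℤ) + d) (k : ℤ)
      omega
    have hr : (k : ℝ) * (((((p.1 : ℕ) : ℤ) + d) / (k : ℤ) : ℤ) : ℝ)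
        = ((p.1 : ℕ) : ℝ) + (d : ℝ) - ((q.1 : ℕ) : ℝ) := by exact_mod_cast hz
    have hsc : ENNReal.ofReal
          (Real.exp ((k : ℝ) * θ * (((((p.1 : ℕ) : ℤ) + d) / (k : ℤ) : ℤ) : ℝ)))
        = ENNReal.ofReal (Real.exp (θ * ((p.1 : ℕ) : ℝ))) *
            ENNReal.ofReal (Real.exp (θ * (d : ℝ))) *
            ENNReal.ofReal (Real.exp (-(θ * ((q.1 : ℕ) : ℝ)))) := by
      rw [← ENNReal.ofReal_mul (Real.exp_nonneg _), ← Real.exp_add,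
        ← ENNReal.ofReal_mul (Real.exp_nonneg _), ← Real.exp_add]
      congr 2
      linear_combination θ * hr
    rw [hsc]
    ring
  · rw [if_neg h, if_neg h, mul_zero, zero_mul]

lemma cp_circAux {ι : Type*} [DecidableEq ι] (Cm C0 Cp : ι → ι → ℝ≥0∞) (k : ℕ)
    (hk : 0 < k) (θ : ℝ) :
    cp (Cstar Cm C0 Cp θ) = cp (circAux Cm C0 Cp k θ) := by
  unfold cp
  congr 1
  ext r
  simp only [Set.mem_setOf_eq]
  constructor
  · rintro h ⟨a, i⟩ ⟨b, j⟩
    refine ne_top_of_le_ne_top (h i j) ?_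
    refine ENNReal.tsum_le_tsum fun n => mul_le_mul_right ?_ _
    rw [← kpow_circAux_sum Cm C0 Cp k hk θ n a i j]
    exact Finset.single_le_sum (f := fun b => kpow (circAux Cm C0 Cp k θ) n (a, i) (b, j))
      (fun c _ => zero_le) (Finset.mem_univ b)
  · intro h i j
    set a : Fin k := ⟨0, hk⟩ with ha
    have key : (∑' n : ℕ, r ^ n * kpow (Cstar Cm C0 Cp θ) n i j)
        = ∑ b : Fin k, ∑' n : ℕ, r ^ n * kpow (circAux Cm C0 Cp k θ) n (a, i) (b, j) := by
      calc (∑' n : ℕ, r ^ n * kpow (Cstar Cm C0 Cp θ) n i j)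
          = ∑' n : ℕ, ∑ b : Fin k, r ^ n * kpow (circAux Cm C0 Cp k θ) n (a, i) (b, j) := by
            refine tsum_congr fun n => ?_
            rw [← Finset.mul_sum, kpow_circAux_sum Cm C0 Cp k hk θ n a i j]
        _ = ∑ b : Fin k, ∑' n : ℕ, r ^ n * kpow (circAux Cm C0 Cp k θ) n (a, i) (b, j) := by
            have hswap : (∑' n : ℕ, ∑ b : Fin k,
                  r ^ n * kpow (circAux Cm C0 Cp k θ) n (a, i) (b, j))
                = ∑' n : ℕ, ∑' b : Fin k,
                  r ^ n * kpow (circAux Cm C0 Cp k θ) n (a, i) (b, j) :=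
              tsum_congr fun n => (tsum_fintype _).symm
            rw [hswap, ENNReal.tsum_comm, tsum_fintype]
    rw [key]
    exact ENNReal.sum_ne_top.2 fun b _ => h (a, i) (b, j)

/-- Proposition A.1: let `C₋₁,C₀,C₁` be nonnegative `m×m` matrices
(`m` finite or countably infinite) such that `(C₋₁+C₀+C₁)ⁿ` is entrywise finite for every
`n` and `C₋₁+C₀+C₁` is irreducible. Then for every `θ ∈ ℝ` and every positive integer `k`,
`cp(C_*(θ)) = cp(C^{[k]}(kθ))`. -/
theorem cp_Cstar_eq_cp_Cblk {ι : Type*} [Countable ι] [DecidableEq ι]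
    (Cm C0 Cp : ι → ι → ℝ≥0∞)
    (hfin : ∀ n : ℕ, ∀ i j : ι,
      kpow (fun a b => Cm a b + C0 a b + Cp a b) n i j ≠ ⊤)
    (hirr : ∀ i j : ι, ∃ n : ℕ, 1 ≤ n ∧
      0 < kpow (fun a b => Cm a b + C0 a b + Cp a b) n i j)
    (θ : ℝ) (k : ℕ) (hk : 0 < k) :
    cp (Cstar Cm C0 Cp θ) = cp (Cblk Cm C0 Cp k ((k : ℝ) * θ)) := by
  have hde : ∀ p : Fin k × ι,
      (fun p : Fin k × ι => ENNReal.ofReal (Real.exp (θ * ((p.1 : ℕ) : ℝ)))) p *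
      (fun q : Fin k × ι => ENNReal.ofReal (Real.exp (-(θ * ((q.1 : ℕ) : ℝ))))) p = 1 := by
    intro p
    rw [← ENNReal.ofReal_mul (Real.exp_nonneg _), ← Real.exp_add, add_neg_cancel,
      Real.exp_zero, ENNReal.ofReal_one]
  have h2 : Cblk Cm C0 Cp k ((k : ℝ) * θ)
      = fun p q => (fun p : Fin k × ι => ENNReal.ofReal (Real.exp (θ * ((p.1 : ℕ) : ℝ)))) p *
          circAux Cm C0 Cp k θ p q *
          (fun q : Fin k × ι => ENNReal.ofReal (Real.exp (-(θ * ((q.1 : ℕ) : ℝ))))) q :=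
    funext fun p => funext fun q => Cblk_eq_conj_aux Cm C0 Cp k θ p q
  rw [cp_circAux Cm C0 Cp k hk θ, h2, cp_conj_aux _ _ _ hde]
end MMRW2d
end
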